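/- Assume λ + μ² ≠ 0 and let P, Q, R, S be a pqrs-quad satisfying the three constraints Q(iπ/2) − μ·P(iπ/2) + R(iπ/2) = 0, μ·P(0) + Q(0) + R(0) = 0, and λ·P(0) − μ·Q(0) + S(0) = 0. Then the B-relations (semi-monodromy relations) hold: for every w ∈ ℂ, P(w+iπ) = e^{iℓπ}·(λ+μ²)⁻¹·(μ·e^{2w}·R(w) + S(w)); Q(w+iπ) = −e^{iℓπ}·((μ·e^{2w}·P(w) + Q(w)) + μ·(λ+μ²)⁻¹·e^{2w}·(μ·e^{2w}·R(w) + S(w))); R(w+iπ) = −e^{iℓπ}·R(w); S(w+iπ) = e^{iℓπ}·((λ+μ²)·P(w) + μ·e^{2w}·R(w)). -/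

import Mathlib

/-!
In the coordinates `V = (R, μe^{2w}P + Q, νP + μe^{2w}R + S, μe^{2w}R + S - νP)`, `ν = λ + μ²`,
the pqrs-system becomes a linear system `V' = M(w) V` whose coefficients involve only `e^{±w}`.
For `e^{2a} = 1` a constant signed permutation `D` satisfies `D M(a - w) = 2(ℓ - 1) D - M(w) D`,
so `e^{2(ℓ-1)w} D V(a - w)` is again a solution. The constraints at `z = 1` and `z = i` say that
`V` and this reflected solution agree (up to the factor `e^{iℓπ}`) at the centres `w = 0`, resp.
`w = iπ/2`, of the reflections; by uniqueness for linear ODEs (Grönwall along segments) they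
agree everywhere, and composing the two reflections gives the translation `w ↦ w + iπ`, which acts
on `V` by `e^{iℓπ} · diag(-1, -1, 1, -1)`.
-/

noncomputable def ipi : ℂ := (Real.pi : ℂ) * Complex.I

open Complex Set Matrix

section LinearODE

variable {E : Type*} [NormedAddCommGroup E] [NormedSpace ℂ E]

theorem eq_zero_of_hasDerivAt_clm_apply {A : ℂ → E →L[ℂ] E} (hA : Continuous A) {f : ℂ → E}
    (hf : ∀ w, HasDerivAt f (A w (f w)) w) {w₀ : ℂ} (h₀ : f w₀ = 0) (w : ℂ) : f w = 0 := by
  let γ : ℝ → ℂ := fun t => w₀ + t * (w - w₀)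
  have hγ : ∀ t : ℝ, HasDerivAt γ (w - w₀) t := fun t => by
    simpa [γ] using (((hasDerivAt_id t).ofReal_comp).mul_const (w - w₀)).const_add w₀
  have hfγ : ∀ t : ℝ, HasDerivAt (f ∘ γ) ((w - w₀) • A (γ t) (f (γ t))) t :=
    fun t => (hf (γ t)).scomp t (hγ t)
  obtain ⟨t₀, -, ht₀⟩ := isCompact_Icc.exists_isMaxOn (nonempty_Icc.2 zero_le_one)
    (hA.comp (continuous_iff_continuousAt.2 fun t => (hγ t).continuousAt)).norm.continuousOn
  have hzero := eq_zero_of_abs_deriv_le_mul_abs_self_of_eq_zero_right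
    (K := ‖w - w₀‖ * ‖A (γ t₀)‖) (a := 0) (b := 1)
    (fun t _ => (hfγ t).continuousAt.continuousWithinAt) (fun t _ => (hfγ t).hasDerivWithinAt)
    (by simpa [γ] using h₀) (fun t ht => ?_) 1 ⟨zero_le_one, le_rfl⟩
  · simpa [γ] using hzero
  · rw [norm_smul, mul_assoc]
    gcongr
    exact ((A (γ t)).le_opNorm _).trans
      (mul_le_mul_of_nonneg_right (ht₀ (Ico_subset_Icc_self ht)) (norm_nonneg _))

variable {n : Type*} [Fintype n] [DecidableEq n]

theorem eq_of_hasDerivAt_mulVec {M : ℂ → Matrix n n ℂ} (hM : Continuous M) {f g : ℂ → n → ℂ}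
    (hf : ∀ w, HasDerivAt f (M w *ᵥ f w) w) (hg : ∀ w, HasDerivAt g (M w *ᵥ g w) w) {w₀ : ℂ}
    (h₀ : f w₀ = g w₀) : f = g := by
  funext w
  rw [← sub_eq_zero]
  let A : ℂ → (n → ℂ) →L[ℂ] (n → ℂ) := fun w => (Matrix.toLin' (M w)).toContinuousLinearMap
  refine eq_zero_of_hasDerivAt_clm_apply (A := A) ?_ (f := f - g) (fun w => ?_) (sub_eq_zero.2 h₀) w
  · exact continuous_clm_apply.2 fun v => hM.matrix_mulVec continuous_const
  · simpa [A, Matrix.mulVec_sub] using (hf w).sub (hg w)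

theorem hasDerivAt_reflect_mulVec {M : ℂ → Matrix n n ℂ} {D : Matrix n n ℂ} {a k : ℂ}
    (hD : ∀ u v, D *ᵥ (M (a - u) *ᵥ v) = k • (D *ᵥ v) - M u *ᵥ (D *ᵥ v)) {f : ℂ → n → ℂ}
    (hf : ∀ w, HasDerivAt f (M w *ᵥ f w) w) (u : ℂ) :
    HasDerivAt (fun u => exp (k * u) • (D *ᵥ f (a - u)))
      (M u *ᵥ (exp (k * u) • (D *ᵥ f (a - u)))) u := by
  have hfa : HasDerivAt (fun u => D *ᵥ f (a - u)) (D *ᵥ -(M (a - u) *ᵥ f (a - u))) u := by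
    have := (hf (a - u)).scomp u ((hasDerivAt_id u).const_sub a)
    exact (Matrix.toLin' D).toContinuousLinearMap.hasFDerivAt.comp_hasDerivAt u
      (by simpa [Function.comp_def] using this)
  have hexp : HasDerivAt (fun u => exp (k * u)) (exp (k * u) * k) u := by
    simpa using ((hasDerivAt_id u).const_mul k).cexp
  refine (hexp.smul hfa).congr_deriv ?_
  rw [Matrix.mulVec_neg, hD, Matrix.mulVec_smul]
  module

end LinearODE

structure IsPQRSQuad (ell lam mu : ℂ) (P Q R S : ℂ → ℂ) : Prop where
  differentiable_P : Differentiable ℂ P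
  differentiable_Q : Differentiable ℂ Q
  differentiable_R : Differentiable ℂ R
  differentiable_S : Differentiable ℂ S
  deriv_P : ∀ w : ℂ, exp w * deriv P w =
    (mu + (ell - 1) * exp w) * P w - Q w + exp (2 * w) * R w
  deriv_Q : ∀ w : ℂ, deriv Q w =
    exp w * ((lam - (ell + 1) * mu * exp w) * P w + mu * Q w + S w)
  deriv_R : ∀ w : ℂ, exp w * deriv R w =
    -(lam + mu ^ 2) * P w + exp w * (2 * (ell - 1) - mu * exp w) * R w - S w
  deriv_S : ∀ w : ℂ, exp w * deriv S w =
    -(lam + mu ^ 2) * Q w + exp (2 * w) * (lam - (ell + 1) * mu * exp w) * R w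
      + ((ell - 1) * exp w - mu) * S w

noncomputable def reducedVec (mu nu : ℂ) (P Q R S : ℂ → ℂ) (w : ℂ) : Fin 4 → ℂ :=
  ![R w, mu * exp (2 * w) * P w + Q w, nu * P w + mu * exp (2 * w) * R w + S w,
    mu * exp (2 * w) * R w + S w - nu * P w]

noncomputable def reducedMatrix (ell mu nu w : ℂ) : Matrix (Fin 4) (Fin 4) ℂ :=
  !![2 * (ell - 1), 0, -exp (-w), 0;
     0, 0, exp w, 0;
     2 * nu * exp w, -(2 * nu * exp (-w)), ell - 1, -(mu * (exp w + exp (-w)));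
     0, 0, -(mu * (exp w + exp (-w))), ell - 1]

def reflectMatrix (s : ℂ) : Matrix (Fin 4) (Fin 4) ℂ :=
  !![0, -s, 0, 0; -s, 0, 0, 0; 0, 0, -1, 0; 0, 0, 0, s]

theorem continuous_reducedMatrix (ell mu nu : ℂ) : Continuous (reducedMatrix ell mu nu) := by
  refine continuous_pi fun i => continuous_pi fun j => ?_
  fin_cases i <;> fin_cases j <;>
    simp only [reducedMatrix, Fin.reduceFinMk, Fin.zero_eta, Fin.mk_one, Fin.isValue, of_apply,
      cons_val', cons_val_zero, cons_val_one, cons_val, cons_val_fin_one] <;>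
    fun_prop

theorem reflectMatrix_mulVec_reducedMatrix_mulVec (ell mu nu : ℂ) {a : ℂ} (ha : exp (2 * a) = 1)
    (u : ℂ) (v : Fin 4 → ℂ) :
    reflectMatrix (exp a) *ᵥ (reducedMatrix ell mu nu (a - u) *ᵥ v) =
      (2 * (ell - 1)) • (reflectMatrix (exp a) *ᵥ v) -
        reducedMatrix ell mu nu u *ᵥ (reflectMatrix (exp a) *ᵥ v) := by
  have hs : exp a * exp a = 1 := by rw [← exp_add, ← two_mul, ha]
  have h₁ : exp (a - u) = exp a * exp (-u) := by rw [sub_eq_add_neg, exp_add]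
  have h₂ : exp (u - a) = exp a * exp u := by
    rw [sub_eq_add_neg, exp_add, exp_neg, inv_eq_of_mul_eq_one_right hs, mul_comm]
  ext i
  fin_cases i <;>
    simp only [reflectMatrix, reducedMatrix, neg_sub, h₁, h₂, Pi.sub_apply, Pi.smul_apply,
      smul_eq_mul, Fin.reduceFinMk, Fin.zero_eta, Fin.mk_one, Fin.isValue, cons_val', cons_val_zero,
      cons_val_one, cons_val, cons_val_fin_one, of_apply, mulVec, dotProduct, Fin.sum_univ_four]
  · linear_combination (-(exp (-u) * v 2)) * hs
  · linear_combination (exp u * v 2) * hs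
  · ring
  · linear_combination (-(mu * (exp u + exp (-u)) * v 2)) * hs

theorem exp_ipi : exp ipi = -1 := exp_pi_mul_I

namespace IsPQRSQuad

variable {ell lam mu : ℂ} {P Q R S : ℂ → ℂ}

theorem hasDerivAt_reducedVec (h : IsPQRSQuad ell lam mu P Q R S) (w : ℂ) :
    HasDerivAt (reducedVec mu (lam + mu ^ 2) P Q R S)
      (reducedMatrix ell mu (lam + mu ^ 2) w *ᵥ reducedVec mu (lam + mu ^ 2) P Q R S w) w := by
  have hP := (h.differentiable_P w).hasDerivAt
  have hQ := (h.differentiable_Q w).hasDerivAt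
  have hR := (h.differentiable_R w).hasDerivAt
  have hS := (h.differentiable_S w).hasDerivAt
  have h₂ : exp (2 * w) = exp w * exp w := by rw [two_mul, exp_add]
  have hE : HasDerivAt (fun w => exp (2 * w)) (exp w * exp w * 2) w := by
    simpa [h₂] using ((hasDerivAt_id w).const_mul 2).cexp
  have hinv : exp w * exp (-w) = 1 := by rw [← exp_add, add_neg_cancel, exp_zero]
  have eP := h.deriv_P w
  have eQ := h.deriv_Q w
  have eR := h.deriv_R w
  have eS := h.deriv_S w
  rw [h₂] at eP eS
  rw [hasDerivAt_pi]
  intro i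
  fin_cases i <;>
    simp only [reducedVec, reducedMatrix, h₂, Fin.reduceFinMk, Fin.zero_eta, Fin.mk_one,
      Fin.isValue, cons_val', cons_val_zero, cons_val_one, cons_val, cons_val_fin_one,
      of_apply, mulVec, dotProduct, Fin.sum_univ_four]
  · refine hR.congr_deriv (mul_left_cancel₀ (exp_ne_zero w) ?_)
    linear_combination eR + ((lam + mu ^ 2) * P w + mu * (exp w * exp w) * R w + S w) * hinv
  · refine (((hE.const_mul mu).mul hP).add hQ).congr_deriv ?_
    rw [h₂]
    linear_combination (mu * exp w) * eP + eQ
  · refine (((hP.const_mul _).add ((hE.const_mul mu).mul hR)).add hS).congr_deriv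
      (mul_left_cancel₀ (exp_ne_zero w) ?_)
    rw [h₂]
    linear_combination (lam + mu ^ 2) * eP + (mu * exp w * exp w) * eR + eS +
      (mu * (mu * (exp w * exp w) * R w + S w - (lam + mu ^ 2) * P w) +
        2 * (lam + mu ^ 2) * (mu * (exp w * exp w) * P w + Q w)) * hinv
  · refine ((((hE.const_mul mu).mul hR).add hS).sub (hP.const_mul _)).congr_deriv
      (mul_left_cancel₀ (exp_ne_zero w) ?_)
    rw [h₂]
    linear_combination -(lam + mu ^ 2) * eP + (mu * exp w * exp w) * eR + eS +
      mu * ((lam + mu ^ 2) * P w + mu * (exp w * exp w) * R w + S w) * hinv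

theorem reflect_reducedVec_ipi_sub (h : IsPQRSQuad ell lam mu P Q R S)
    (hconA : Q (ipi / 2) - mu * P (ipi / 2) + R (ipi / 2) = 0) (u : ℂ) :
    exp (2 * (ell - 1) * u) •
        (reflectMatrix (-1) *ᵥ reducedVec mu (lam + mu ^ 2) P Q R S (ipi - u)) =
      exp (I * ell * Real.pi) • reducedVec mu (lam + mu ^ 2) P Q R S u := by
  set c := exp (I * ell * Real.pi)
  have hk : exp (2 * (ell - 1) * (ipi / 2)) = -c := by
    rw [show 2 * (ell - 1) * (ipi / 2) = I * ell * Real.pi - ipi by unfold ipi; ring,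
      exp_sub, exp_ipi, div_neg, div_one]
  have h₂ : exp (2 * (ipi / 2)) = -1 := by rw [mul_div_cancel₀ _ two_ne_zero, exp_ipi]
  have hD := reflectMatrix_mulVec_reducedMatrix_mulVec ell mu (lam + mu ^ 2)
    (a := ipi) (by rw [ipi, ← mul_assoc, exp_two_pi_mul_I])
  rw [exp_ipi] at hD
  refine congrFun (eq_of_hasDerivAt_mulVec (continuous_reducedMatrix ell mu _)
    (hasDerivAt_reflect_mulVec hD h.hasDerivAt_reducedVec)
    (fun u => ((h.hasDerivAt_reducedVec u).const_smul c).congr_deriv (Matrix.mulVec_smul ..).symm)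
    (w₀ := ipi / 2) ?_) u
  ext i
  fin_cases i <;>
    simp only [reducedVec, reflectMatrix, hk, sub_half, h₂, Pi.smul_apply, smul_eq_mul,
      Fin.reduceFinMk, Fin.zero_eta, Fin.mk_one, Fin.isValue, cons_val', cons_val_zero,
      cons_val_one, cons_val, cons_val_fin_one, of_apply, mulVec, dotProduct, Fin.sum_univ_four]
  · linear_combination (-c) * hconA
  · linear_combination (-c) * hconA
  · ring
  · ring

theorem reflect_reducedVec_neg (h : IsPQRSQuad ell lam mu P Q R S)
    (hconC1 : mu * P 0 + Q 0 + R 0 = 0) (hconC2 : lam * P 0 - mu * Q 0 + S 0 = 0) (u : ℂ) :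
    exp (2 * (ell - 1) * u) • (reflectMatrix 1 *ᵥ reducedVec mu (lam + mu ^ 2) P Q R S (-u)) =
      reducedVec mu (lam + mu ^ 2) P Q R S u := by
  have hD := reflectMatrix_mulVec_reducedMatrix_mulVec ell mu (lam + mu ^ 2) (a := 0) (by simp)
  rw [exp_zero] at hD
  have hsol := eq_of_hasDerivAt_mulVec (continuous_reducedMatrix ell mu _)
    (hasDerivAt_reflect_mulVec hD h.hasDerivAt_reducedVec) h.hasDerivAt_reducedVec (w₀ := 0) ?_
  · simpa only [zero_sub] using congrFun hsol u
  ext i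
  fin_cases i <;>
    simp only [reducedVec, reflectMatrix, mul_zero, exp_zero, sub_zero, one_smul,
      Fin.reduceFinMk, Fin.zero_eta, Fin.mk_one, Fin.isValue, cons_val', cons_val_zero,
      cons_val_one, cons_val, cons_val_fin_one, of_apply, mulVec, dotProduct, Fin.sum_univ_four]
  · linear_combination -hconC1
  · linear_combination -hconC1
  · linear_combination -2 * hconC2 - 2 * mu * hconC1
  · ring

theorem reducedVec_add_ipi (h : IsPQRSQuad ell lam mu P Q R S)
    (hconA : Q (ipi / 2) - mu * P (ipi / 2) + R (ipi / 2) = 0)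
    (hconC1 : mu * P 0 + Q 0 + R 0 = 0) (hconC2 : lam * P 0 - mu * Q 0 + S 0 = 0) (w : ℂ) :
    reducedVec mu (lam + mu ^ 2) P Q R S (w + ipi) = exp (I * ell * Real.pi) •
      (Matrix.diagonal ![-1, -1, 1, -1] *ᵥ reducedVec mu (lam + mu ^ 2) P Q R S w) := by
  have key := h.reflect_reducedVec_ipi_sub hconA (-w)
  rw [← h.reflect_reducedVec_neg hconC1 hconC2 (-w), neg_neg, sub_neg_eq_add, add_comm ipi w,
    smul_comm] at key
  replace key := smul_right_injective _ (exp_ne_zero _) key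
  have hsq : reflectMatrix (-1) * reflectMatrix (-1) = 1 := by
    ext i j
    fin_cases i <;> fin_cases j <;> simp [reflectMatrix, Matrix.mul_apply, Fin.sum_univ_four]
  have hprod : reflectMatrix (-1) * reflectMatrix 1 = Matrix.diagonal ![-1, -1, 1, -1] := by
    ext i j
    fin_cases i <;> fin_cases j <;> simp [reflectMatrix, Matrix.mul_apply, Fin.sum_univ_four]
  simpa [Matrix.mulVec_mulVec, Matrix.mulVec_smul, hsq, hprod] using
    congrArg (reflectMatrix (-1) *ᵥ ·) key

end IsPQRSQuad

theorem statement_2 (ell lam mu : ℂ) (hne : lam + mu ^ 2 ≠ 0) (P Q R S : ℂ → ℂ)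
    (hP : Differentiable ℂ P) (hQ : Differentiable ℂ Q)
    (hR : Differentiable ℂ R) (hS : Differentiable ℂ S)
    (hsys1 : ∀ w : ℂ, Complex.exp w * deriv P w =
      (mu + (ell - 1) * Complex.exp w) * P w - Q w + Complex.exp (2 * w) * R w)
    (hsys2 : ∀ w : ℂ, deriv Q w =
      Complex.exp w * ((lam - (ell + 1) * mu * Complex.exp w) * P w + mu * Q w + S w))
    (hsys3 : ∀ w : ℂ, Complex.exp w * deriv R w =
      -(lam + mu ^ 2) * P w + Complex.exp w * (2 * (ell - 1) - mu * Complex.exp w) * R w - S w)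
    (hsys4 : ∀ w : ℂ, Complex.exp w * deriv S w =
      -(lam + mu ^ 2) * Q w + Complex.exp (2 * w) * (lam - (ell + 1) * mu * Complex.exp w) * R w
        + ((ell - 1) * Complex.exp w - mu) * S w)
    (hconA : Q (ipi / 2) - mu * P (ipi / 2) + R (ipi / 2) = 0)
    (hconC1 : mu * P 0 + Q 0 + R 0 = 0)
    (hconC2 : lam * P 0 - mu * Q 0 + S 0 = 0) :
    ∀ w : ℂ,
      P (w + ipi) = Complex.exp (Complex.I * ell * (Real.pi : ℂ)) * (lam + mu ^ 2)⁻¹ *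
        (mu * Complex.exp (2 * w) * R w + S w) ∧
      Q (w + ipi) = -Complex.exp (Complex.I * ell * (Real.pi : ℂ)) *
        ((mu * Complex.exp (2 * w) * P w + Q w) +
          mu * (lam + mu ^ 2)⁻¹ * Complex.exp (2 * w) *
            (mu * Complex.exp (2 * w) * R w + S w)) ∧
      R (w + ipi) = -Complex.exp (Complex.I * ell * (Real.pi : ℂ)) * R w ∧
      S (w + ipi) = Complex.exp (Complex.I * ell * (Real.pi : ℂ)) * ((lam + mu ^ 2) * P w + mu * Complex.exp (2 * w) * R w) := by
  intro w
  have hquad : IsPQRSQuad ell lam mu P Q R S := ⟨hP, hQ, hR, hS, hsys1, hsys2, hsys3, hsys4⟩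
  have hV := congrFun (hquad.reducedVec_add_ipi hconA hconC1 hconC2 w)
  have hexp : exp (2 * (w + ipi)) = exp (2 * w) := by
    rw [mul_add, exp_add, ipi, ← mul_assoc, exp_two_pi_mul_I, mul_one]
  have hr := hV 0
  have hη := hV 1
  have hξ := hV 2
  have hβ := hV 3
  simp only [reducedVec, Pi.smul_apply, Matrix.mulVec_diagonal, hexp, smul_eq_mul, Fin.isValue,
    cons_val_zero, cons_val_one, cons_val] at hr hη hξ hβ
  set c := exp (I * ell * Real.pi)
  have hνP : (lam + mu ^ 2) * P (w + ipi) = c * (mu * exp (2 * w) * R w + S w) := by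
    linear_combination (hξ - hβ) / 2
  have hPw : P (w + ipi) = c * (lam + mu ^ 2)⁻¹ * (mu * exp (2 * w) * R w + S w) := by
    rw [eq_comm, mul_comm c, mul_assoc, ← hνP, inv_mul_cancel_left₀ hne]
  refine ⟨hPw, ?_, ?_, ?_⟩
  · linear_combination hη - mu * exp (2 * w) * hPw
  · linear_combination hr
  · linear_combination (hξ + hβ) / 2 - mu * exp (2 * w) * hr
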